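/- arXiv:math/9904033 — 2 statements merged into one kernel-verified Lean document; each statement's English description precedes it below -/
import Mathlib

section
/- Let A be a commutative ring which is a ℂ-algebra equipped with an internal grading 𝒜 : ℕ × ℕ → Submodule ℂ A by the additive monoid ℕ × ℕ (so A is a graded ℂ-algebra with homogeneous components 𝒜 (p,q)). Assume 𝒜 (0,1) = 0. Let x₁, …, x_l be homogeneous elements of A with x_i ∈ 𝒜 (a_i, b_i) where b_i ≤ a_i + 1 for every i. If Σ_i a_i = 1 and Σ_i b_i ≥ 3, then the product x₁ ⋯ x_l = 0. -/
/-- Key combinatorial step in the vanishing `H^{1,δ-1} = H^{1,δ-2} = H^{1,δ-3} = 0`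
(statement (3.9)): in a `ℕ × ℕ`-graded commutative `ℂ`-algebra `A` with `𝒜 (0,1) = 0`,
any product of homogeneous elements `x i ∈ 𝒜 (a i, b i)` with `b i ≤ a i + 1`,
`∑ a i = 1` and `∑ b i ≥ 3` vanishes. -/
theorem product_of_homogeneous_vanishes
    (A : Type*) [CommRing A] [Algebra ℂ A]
    (𝒜 : ℕ × ℕ → Submodule ℂ A) [GradedAlgebra 𝒜]
    (h01 : 𝒜 (0, 1) = ⊥)
    (l : ℕ) (x : Fin l → A) (a b : Fin l → ℕ)
    (hx : ∀ i, x i ∈ 𝒜 (a i, b i))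
    (hab : ∀ i, b i ≤ a i + 1)
    (ha : ∑ i, a i = 1)
    (hb : 3 ≤ ∑ i, b i) :
    ∏ i, x i = 0 := by
  by_cases h : ∃ i, a i = 0 ∧ b i = 1
  · obtain ⟨i, ha0, hb1⟩ := h
    have hxi : x i = 0 := by
      have := hx i
      rw [ha0, hb1, h01, Submodule.mem_bot] at this
      exact this
    exact Finset.prod_eq_zero (Finset.mem_univ i) hxi
  · exfalso
    push_neg at h
    have hle : ∀ i ∈ Finset.univ, b i ≤ 2 * a i := by
      intro i _
      rcases Nat.eq_zero_or_pos (a i) with h0 | h1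
      · have := h i h0
        have := hab i
        omega
      · have := hab i
        omega
    have hsum : ∑ i, b i ≤ ∑ i, 2 * a i := Finset.sum_le_sum hle
    rw [← Finset.mul_sum, ha] at hsum
    omega
end

section
/- Let A be a commutative ring which is a ℂ-algebra equipped with an internal grading 𝒜 : ℕ × ℕ → Submodule ℂ A by the additive monoid ℕ × ℕ (so A is a graded ℂ-algebra with homogeneous components 𝒜 (p,q)). Suppose S ⊆ A is a set of homogeneous elements generating A as a ℂ-algebra (Algebra.adjoin ℂ S = ⊤), such that every s ∈ S lies in some component 𝒜 (a,b) with b ≤ a + 1. If 𝒜 (0,1) = 0, then 𝒜 (1,q) = 0 for every natural number q ≥ 3. -/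
/-!
The components of degree in an additive submonoid `G` of the grading monoid span a
subalgebra, so if homogeneous generators have degrees in `G` then every component of degree
outside `G` vanishes. Here a nonzero generator of bidegree `(a, b)` with `b ≤ a + 1` has
`(a, b) ≠ (0, 1)`, hence `a = b = 0` or `a ≥ 1`; a product of degree `1` in the first index
therefore has one factor of bidegree `(1, b)` with `b ≤ 2` and all others of bidegree `(0, 0)`.
-/

namespace GradedAlgebra

variable {ι R A : Type*} [AddMonoid ι] [CommSemiring R] [Semiring A] [Algebra R A]
  (𝒜 : ι → Submodule R A)

def subalgebraOfDegrees [SetLike.GradedMonoid 𝒜] (G : AddSubmonoid ι) : Subalgebra R A :=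
  (⨆ i : G, 𝒜 i).toSubalgebra
    (Submodule.mem_iSup_of_mem (⟨0, G.zero_mem⟩ : G) SetLike.GradedOne.one_mem)
    fun _ _ hx hy => by
      have hmul : (⨆ i : G, 𝒜 i) * (⨆ j : G, 𝒜 j) ≤ ⨆ i : G, 𝒜 i := by
        simp only [Submodule.iSup_mul, Submodule.mul_iSup, iSup_le_iff]
        intro j i
        exact Submodule.mul_le.mpr fun x hx y hy =>
          Submodule.mem_iSup_of_mem (⟨i + j, G.add_mem i.2 j.2⟩ : G)
            (SetLike.mul_mem_graded hx hy)
      exact hmul (Submodule.mul_mem_mul hx hy)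

variable [DecidableEq ι] [GradedAlgebra 𝒜]

theorem decompose_apply_eq_zero_of_mem_iSup {G : Set ι} {x : A} (hx : x ∈ ⨆ i : G, 𝒜 i)
    {j : ι} (hj : j ∉ G) : (DirectSum.decompose 𝒜 x j : A) = 0 := by
  refine Submodule.iSup_induction _ (motive := fun y => (DirectSum.decompose 𝒜 y j : A) = 0) hx
    (fun i y hy => DirectSum.decompose_of_mem_ne 𝒜 hy fun h => hj (h ▸ i.2)) (by simp) ?_
  intro y z hy hz
  simp [hy, hz]

theorem eq_bot_of_adjoin_eq_top {G : AddSubmonoid ι} {S : Set A}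
    (hgen : Algebra.adjoin R S = ⊤) (hS : ∀ s ∈ S, ∃ i ∈ G, s ∈ 𝒜 i)
    {j : ι} (hj : j ∉ G) : 𝒜 j = ⊥ := by
  have hS_le : Algebra.adjoin R S ≤ subalgebraOfDegrees 𝒜 G :=
    Algebra.adjoin_le fun s hs => by
      obtain ⟨i, hi, hsi⟩ := hS s hs
      exact Submodule.mem_iSup_of_mem (⟨i, hi⟩ : G) hsi
  refine (Submodule.eq_bot_iff _).mpr fun x hx => ?_
  have hx_sup : x ∈ ⨆ i : (G : Set ι), 𝒜 i := hS_le (hgen ▸ Algebra.mem_top)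
  rw [← DirectSum.decompose_of_mem_same 𝒜 hx]
  exact decompose_apply_eq_zero_of_mem_iSup 𝒜 hx_sup hj

end GradedAlgebra

def admissibleBidegrees : AddSubmonoid (ℕ × ℕ) where
  carrier := {d | 2 ≤ d.1 ∨ (d.1 = 1 ∧ d.2 ≤ 2) ∨ d = 0}
  zero_mem' := by simp
  add_mem' := by
    rintro ⟨a, b⟩ ⟨c, d⟩ h₁ h₂
    simp only [Set.mem_ofPred_eq, Prod.mk_add_mk, Prod.mk_eq_zero] at *
    omega

theorem mem_admissibleBidegrees {d : ℕ × ℕ} :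
    d ∈ admissibleBidegrees ↔ 2 ≤ d.1 ∨ (d.1 = 1 ∧ d.2 ≤ 2) ∨ d = 0 :=
  Iff.rfl

/-- Abstract content of the vanishing statement (3.9): if a `ℕ × ℕ`-graded commutative
`ℂ`-algebra `A` is generated by homogeneous elements whose bidegrees `(a, b)` satisfy
`b ≤ a + 1`, and `𝒜 (0,1) = 0`, then `𝒜 (1,q) = 0` for all `q ≥ 3`. -/
theorem graded_component_one_q_eq_bot
    (A : Type*) [CommRing A] [Algebra ℂ A]
    (𝒜 : ℕ × ℕ → Submodule ℂ A) [GradedAlgebra 𝒜]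
    (S : Set A)
    (hgen : Algebra.adjoin ℂ S = ⊤)
    (hhom : ∀ s ∈ S, ∃ a b : ℕ, b ≤ a + 1 ∧ s ∈ 𝒜 (a, b))
    (h01 : 𝒜 (0, 1) = ⊥) :
    ∀ q : ℕ, 3 ≤ q → 𝒜 (1, q) = ⊥ := by
  intro q hq
  refine GradedAlgebra.eq_bot_of_adjoin_eq_top 𝒜 (G := admissibleBidegrees) hgen ?_ ?_
  · intro s hs
    obtain ⟨a, b, hab, hs_mem⟩ := hhom s hs
    by_cases h_deg : (a, b) = (0, 1)
    · rw [h_deg, h01, Submodule.mem_bot] at hs_mem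
      exact ⟨0, zero_mem _, hs_mem ▸ zero_mem _⟩
    · refine ⟨(a, b), ?_, hs_mem⟩
      simp only [mem_admissibleBidegrees, Prod.mk_eq_zero, Prod.mk.injEq] at h_deg ⊢
      omega
  · simp only [mem_admissibleBidegrees, Prod.mk_eq_zero]
    omega
end
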